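/- arXiv:2111.14222 — 5 statements merged into one kernel-verified Lean document; each statement's English description precedes it below -/
import Mathlib

section
/- Let H be a complex Hilbert space, let N be a norm on B(H), and let 0 ≤ ν ≤ 1. Then the function w_{(N,ν)} : B(H) → [0,∞) defined by w_{(N,ν)}(A) = sup_{θ∈ℝ} N(ν e^{iθ} A + (1-ν) e^{-iθ} A*) is a norm on B(H); that is, w_{(N,ν)}(A) ≥ 0 with w_{(N,ν)}(A) = 0 if and only if A = 0, w_{(N,ν)}(αA) = |α| w_{(N,ν)}(A) for all complex α, and w_{(N,ν)}(A + B) ≤ w_{(N,ν)}(A) + w_{(N,ν)}(B) for all A, B ∈ B(H). -/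
variable {H : Type*} [NormedAddCommGroup H] [InnerProductSpace ℂ H] [CompleteSpace H]

/-- The operator `ν e^{iθ} A + (1-ν) e^{-iθ} A*`. -/
noncomputable def weightedPart (ν θ : ℝ) (A : H →L[ℂ] H) : H →L[ℂ] H :=
  ((ν : ℂ) * Complex.exp (θ * Complex.I)) • A +
    (((1 - ν : ℝ) : ℂ) * Complex.exp (-(θ * Complex.I))) • ContinuousLinearMap.adjoint A

/-- The weighted `N`-numerical radius `w_{(N,ν)}(A) = sup_{θ ∈ ℝ} N(ν e^{iθ} A + (1-ν) e^{-iθ} A*)`. -/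
noncomputable def wN (N : (H →L[ℂ] H) → ℝ) (ν : ℝ) (A : H →L[ℂ] H) : ℝ :=
  ⨆ θ : ℝ, N (weightedPart ν θ A)

section Aux

lemma wp_norm_coeff1 (ν θ : ℝ) (hν₀ : 0 ≤ ν) :
    ‖(ν : ℂ) * Complex.exp (θ * Complex.I)‖ = ν := by
  simp [norm_mul, Complex.norm_exp, Complex.norm_real, abs_of_nonneg hν₀]

lemma wp_norm_coeff2 (ν θ : ℝ) (hν₁ : ν ≤ 1) :
    ‖((1 - ν : ℝ) : ℂ) * Complex.exp (-(θ * Complex.I))‖ = 1 - ν := by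
  rw [norm_mul, Complex.norm_real, Real.norm_eq_abs, abs_of_nonneg (by linarith : (0:ℝ) ≤ 1 - ν),
    Complex.norm_exp]
  simp

lemma wp_le (N : (H →L[ℂ] H) → ℝ)
    (hN_smul : ∀ (α : ℂ) (A), N (α • A) = ‖α‖ * N A)
    (hN_add : ∀ A B, N (A + B) ≤ N A + N B)
    (ν : ℝ) (hν₀ : 0 ≤ ν) (hν₁ : ν ≤ 1) (A : H →L[ℂ] H) (θ : ℝ) :
    N (weightedPart ν θ A) ≤ ν * N A + (1 - ν) * N (ContinuousLinearMap.adjoint A) := by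
  refine le_trans (hN_add _ _) ?_
  rw [hN_smul, hN_smul, wp_norm_coeff1 ν θ hν₀, wp_norm_coeff2 ν θ hν₁]

lemma wp_bdd (N : (H →L[ℂ] H) → ℝ)
    (hN_smul : ∀ (α : ℂ) (A), N (α • A) = ‖α‖ * N A)
    (hN_add : ∀ A B, N (A + B) ≤ N A + N B)
    (ν : ℝ) (hν₀ : 0 ≤ ν) (hν₁ : ν ≤ 1) (A : H →L[ℂ] H) :
    BddAbove (Set.range fun θ => N (weightedPart ν θ A)) := by
  refine ⟨ν * N A + (1 - ν) * N (ContinuousLinearMap.adjoint A), ?_⟩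
  rintro x ⟨θ, rfl⟩
  exact wp_le N hN_smul hN_add ν hν₀ hν₁ A θ

lemma wp_add (ν θ : ℝ) (A B : H →L[ℂ] H) :
    weightedPart ν θ (A + B) = weightedPart ν θ A + weightedPart ν θ B := by
  simp only [weightedPart, map_add, smul_add]
  abel

lemma wp_smul (ν θ : ℝ) (α : ℂ) (A : H →L[ℂ] H) :
    weightedPart ν θ (α • A) = ((‖α‖ : ℝ) : ℂ) • weightedPart ν (θ + Complex.arg α) A := by
  have hα : ((‖α‖ : ℝ) : ℂ) * Complex.exp (Complex.arg α * Complex.I) = α :=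
    Complex.norm_mul_exp_arg_mul_I α
  have hconj : (starRingEnd ℂ) α
      = ((‖α‖ : ℝ) : ℂ) * Complex.exp (-(Complex.arg α * Complex.I)) := by
    conv_lhs => rw [← hα]
    rw [map_mul, ← Complex.exp_conj, map_mul, Complex.conj_ofReal, Complex.conj_I,
      Complex.conj_ofReal]
    ring_nf
  simp only [weightedPart, map_smulₛₗ, smul_smul, smul_add, RingHom.id_apply]
  congr 1
  · congr 1
    push_cast
    rw [add_mul, Complex.exp_add]
    linear_combination (-(↑ν * Complex.exp (↑θ * Complex.I))) * hα
  · congr 1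
    rw [hconj]
    push_cast
    rw [add_mul, neg_add, Complex.exp_add]
    ring

end Aux

/-- `w_{(N,ν)}` is a norm on `B(H)`. -/
theorem stmt0 (N : (H →L[ℂ] H) → ℝ)
    (hN_nonneg : ∀ A, 0 ≤ N A)
    (hN_eq_zero : ∀ A, N A = 0 ↔ A = 0)
    (hN_smul : ∀ (α : ℂ) (A), N (α • A) = ‖α‖ * N A)
    (hN_add : ∀ A B, N (A + B) ≤ N A + N B)
    (ν : ℝ) (hν₀ : 0 ≤ ν) (hν₁ : ν ≤ 1) :
    (∀ A : H →L[ℂ] H, 0 ≤ wN N ν A) ∧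
    (∀ A : H →L[ℂ] H, wN N ν A = 0 ↔ A = 0) ∧
    (∀ (α : ℂ) (A : H →L[ℂ] H), wN N ν (α • A) = ‖α‖ * wN N ν A) ∧
    (∀ A B : H →L[ℂ] H, wN N ν (A + B) ≤ wN N ν A + wN N ν B) := by
  have hbdd := wp_bdd N hN_smul hN_add ν hν₀ hν₁
  have hle : ∀ (A : H →L[ℂ] H) (θ : ℝ), N (weightedPart ν θ A) ≤ wN N ν A := by
    intro A θ
    exact le_ciSup (hbdd A) θ
  have hnonneg : ∀ A : H →L[ℂ] H, 0 ≤ wN N ν A := by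
    intro A
    exact le_trans (hN_nonneg (weightedPart ν 0 A)) (hle A 0)
  refine ⟨hnonneg, ?_, ?_, ?_⟩
  · intro A
    constructor
    · intro h
      have hzero : ∀ θ : ℝ, weightedPart ν θ A = 0 := by
        intro θ
        rw [← hN_eq_zero]
        exact le_antisymm (h ▸ hle A θ) (hN_nonneg _)
      have h0 := hzero 0
      have h1 := hzero (Real.pi / 2)
      set B := ContinuousLinearMap.adjoint A with hB
      have hexp : Complex.exp ((Real.pi / 2 : ℝ) * Complex.I) = Complex.I := by
        rw [Complex.exp_mul_I, ← Complex.ofReal_cos, ← Complex.ofReal_sin,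
          Real.cos_pi_div_two, Real.sin_pi_div_two]
        simp
      have hexp' : Complex.exp (-((Real.pi / 2 : ℝ) * Complex.I)) = -Complex.I := by
        rw [Complex.exp_neg, hexp, Complex.inv_I]
      simp only [weightedPart, Complex.ofReal_zero, zero_mul, neg_zero, Complex.exp_zero,
        mul_one, hexp, hexp', ← hB] at h0 h1
      -- h0 : (ν:ℂ) • A + ((1-ν:ℝ):ℂ) • B = 0
      -- h1 : ((ν:ℂ)*I) • A + (((1-ν:ℝ):ℂ)*(-I)) • B = 0
      have h1' : (ν : ℂ) • A - ((1 - ν : ℝ) : ℂ) • B = 0 := by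
        have := congrArg (fun X => (-Complex.I) • X) h1
        simp only [smul_add, smul_smul, smul_zero] at this
        rw [show -Complex.I * ((ν : ℂ) * Complex.I) = (ν : ℂ) by
              rw [mul_comm]; rw [mul_assoc]; simp,
            show -Complex.I * (((1 - ν : ℝ) : ℂ) * -Complex.I) = -((1 - ν : ℝ) : ℂ) by
              ring_nf; rw [Complex.I_sq]; ring] at this
        rw [sub_eq_add_neg, ← neg_smul]
        exact this
      have hA2 : ((2 * ν : ℝ) : ℂ) • A = 0 := by
        have := congrArg₂ (· + ·) h0 h1'
        simp only [add_zero] at this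
        rw [show (ν:ℂ) • A + ((1-ν:ℝ):ℂ) • B + ((ν:ℂ) • A - ((1-ν:ℝ):ℂ) • B)
            = ((2*ν:ℝ):ℂ) • A by push_cast; module] at this
        exact this
      have hB2 : ((2 * (1 - ν) : ℝ) : ℂ) • B = 0 := by
        have := congrArg₂ (· - ·) h0 h1'
        simp only [sub_zero] at this
        rw [show (ν:ℂ) • A + ((1-ν:ℝ):ℂ) • B - ((ν:ℂ) • A - ((1-ν:ℝ):ℂ) • B)
            = ((2*(1-ν):ℝ):ℂ) • B by push_cast; module] at this
        exact this
      rcases eq_or_lt_of_le hν₀ with hν | hν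
      · have hc : ((2 * (1 - ν) : ℝ) : ℂ) ≠ 0 := by
          rw [ne_eq, Complex.ofReal_eq_zero, ← hν]; norm_num
        have hB0 : B = 0 := by
          rcases smul_eq_zero.mp hB2 with h | h
          · exact absurd h hc
          · exact h
        have : A = ContinuousLinearMap.adjoint B := by rw [hB, ContinuousLinearMap.adjoint_adjoint]
        rw [this, hB0, map_zero]
      · have hc : ((2 * ν : ℝ) : ℂ) ≠ 0 := by
          rw [ne_eq, Complex.ofReal_eq_zero]; positivity
        rcases smul_eq_zero.mp hA2 with h | h
        · exact absurd h hc
        · exact h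
    · intro h
      subst h
      have : ∀ θ : ℝ, weightedPart ν θ (0 : H →L[ℂ] H) = 0 := by
        intro θ; simp [weightedPart]
      simp only [wN, this]
      rw [show N (0 : H →L[ℂ] H) = 0 from (hN_eq_zero 0).mpr rfl]
      exact ciSup_const
  · intro α A
    have h1 : ∀ θ : ℝ, N (weightedPart ν θ (α • A))
        = ‖α‖ * N (weightedPart ν (θ + Complex.arg α) A) := by
      intro θ
      rw [wp_smul, hN_smul]
      congr 1
      simp
    calc wN N ν (α • A) = ⨆ θ : ℝ, ‖α‖ * N (weightedPart ν (θ + Complex.arg α) A) := by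
          simp only [wN, h1]
      _ = ‖α‖ * ⨆ θ : ℝ, N (weightedPart ν (θ + Complex.arg α) A) := by
          rw [Real.mul_iSup_of_nonneg (norm_nonneg α)]
      _ = ‖α‖ * wN N ν A := by
          congr 1
          exact (Equiv.addRight (Complex.arg α)).surjective.iSup_comp
            (g := fun θ => N (weightedPart ν θ A))
  · intro A B
    refine ciSup_le fun θ => ?_
    rw [wp_add]
    exact le_trans (hN_add _ _) (add_le_add (hle A θ) (hle B θ))
end

section
/- Let H be a complex Hilbert space, let N be a norm on B(H), and let 0 ≤ ν ≤ 1. Then for every A ∈ B(H), max{ν N(A), (1-ν) N(A*)} ≤ w_{(N,ν)}(A) ≤ max{N(A), N(A*)}. -/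
variable {H : Type*} [NormedAddCommGroup H] [InnerProductSpace ℂ H] [CompleteSpace H]

theorem stmt1 (N : (H →L[ℂ] H) → ℝ)
    (hN_nonneg : ∀ A, 0 ≤ N A)
    (hN_eq_zero : ∀ A, N A = 0 ↔ A = 0)
    (hN_smul : ∀ (α : ℂ) (A), N (α • A) = ‖α‖ * N A)
    (hN_add : ∀ A B, N (A + B) ≤ N A + N B)
    (ν : ℝ) (hν₀ : 0 ≤ ν) (hν₁ : ν ≤ 1) (A : H →L[ℂ] H) :
    max (ν * N A) ((1 - ν) * N (ContinuousLinearMap.adjoint A)) ≤ wN N ν A ∧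
      wN N ν A ≤ max (N A) (N (ContinuousLinearMap.adjoint A)) := by
  set A' := ContinuousLinearMap.adjoint A with hA'
  have hν₁' : (0:ℝ) ≤ 1 - ν := by linarith
  -- pointwise bound
  have hbound : ∀ θ : ℝ, N (weightedPart ν θ A) ≤ ν * N A + (1 - ν) * N A' := by
    intro θ
    have h1 : ‖(ν : ℂ) * Complex.exp (θ * Complex.I)‖ = ν := by
      simp only [norm_mul, Complex.norm_real, Real.norm_eq_abs, Complex.norm_exp]
      simp [abs_of_nonneg hν₀]
    have h2 : ‖((1 - ν : ℝ) : ℂ) * Complex.exp (-(θ * Complex.I))‖ = 1 - ν := by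
      simp only [norm_mul, Complex.norm_real, Real.norm_eq_abs, Complex.norm_exp]
      simp [abs_of_nonneg hν₁']
    calc N (weightedPart ν θ A)
        ≤ N (((ν : ℂ) * Complex.exp (θ * Complex.I)) • A) +
            N ((((1 - ν : ℝ) : ℂ) * Complex.exp (-(θ * Complex.I))) • A') := hN_add _ _
      _ = ν * N A + (1 - ν) * N A' := by rw [hN_smul, hN_smul, h1, h2]
  have hbdd : BddAbove (Set.range fun θ : ℝ => N (weightedPart ν θ A)) := by
    refine ⟨ν * N A + (1 - ν) * N A', ?_⟩
    rintro x ⟨θ, rfl⟩; exact hbound θ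
  -- special values
  have hW0 : weightedPart ν 0 A = (ν:ℂ) • A + ((1-ν:ℝ):ℂ) • A' := by
    simp [weightedPart, hA']
  have h1 : Complex.exp ((Real.pi/2 : ℝ) * Complex.I) = Complex.I := by
    rw [Complex.exp_mul_I]; norm_cast; simp
  have h2 : Complex.exp (-((Real.pi/2 : ℝ) * Complex.I)) = -Complex.I := by
    rw [Complex.exp_neg, h1]; simp [Complex.inv_I]
  have hWpi : weightedPart ν (Real.pi/2) A
      = ((ν:ℂ)*Complex.I) • A + (((1-ν:ℝ):ℂ)*(-Complex.I)) • A' := by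
    rw [weightedPart]
    push_cast
    rw [show ((Real.pi:ℂ)/2) = ((Real.pi/2 : ℝ) : ℂ) by push_cast; ring, h1, h2]
  have hle : ∀ θ : ℝ, N (weightedPart ν θ A) ≤ wN N ν A := fun θ =>
    le_ciSup hbdd θ
  constructor
  · -- lower bound
    rw [max_le_iff]
    constructor
    · -- ν N A ≤ w : 2νA = W0 + (-I)•Wπ/2
      have key : ((2*ν : ℝ):ℂ) • A = weightedPart ν 0 A + (-Complex.I) • weightedPart ν (Real.pi/2) A := by
        rw [hW0, hWpi]
        match_scalars <;> (push_cast; ring_nf; simp [Complex.I_sq]; try ring)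
      have : 2 * ν * N A ≤ N (weightedPart ν 0 A) + N (weightedPart ν (Real.pi/2) A) := by
        calc 2 * ν * N A = N (((2*ν : ℝ):ℂ) • A) := by
              rw [hN_smul]
              simp only [Complex.norm_real, Real.norm_eq_abs]
              rw [abs_of_nonneg (by positivity : (0:ℝ) ≤ 2 * ν)]
          _ = N (weightedPart ν 0 A + (-Complex.I) • weightedPart ν (Real.pi/2) A) := by rw [key]
          _ ≤ N (weightedPart ν 0 A) + N ((-Complex.I) • weightedPart ν (Real.pi/2) A) := hN_add _ _
          _ = N (weightedPart ν 0 A) + N (weightedPart ν (Real.pi/2) A) := by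
              rw [hN_smul]; simp
      nlinarith [hle 0, hle (Real.pi/2)]
    · have key : ((2*(1-ν) : ℝ):ℂ) • A' = weightedPart ν 0 A + Complex.I • weightedPart ν (Real.pi/2) A := by
        rw [hW0, hWpi]
        match_scalars <;> (push_cast; ring_nf; simp [Complex.I_sq]; try ring)
      have : 2 * (1-ν) * N A' ≤ N (weightedPart ν 0 A) + N (weightedPart ν (Real.pi/2) A) := by
        calc 2 * (1-ν) * N A' = N (((2*(1-ν) : ℝ):ℂ) • A') := by
              rw [hN_smul]
              simp only [Complex.norm_real, Real.norm_eq_abs]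
              rw [abs_of_nonneg (mul_nonneg (by norm_num : (0:ℝ) ≤ 2) hν₁')]
          _ = N (weightedPart ν 0 A + Complex.I • weightedPart ν (Real.pi/2) A) := by rw [key]
          _ ≤ N (weightedPart ν 0 A) + N (Complex.I • weightedPart ν (Real.pi/2) A) := hN_add _ _
          _ = N (weightedPart ν 0 A) + N (weightedPart ν (Real.pi/2) A) := by
              rw [hN_smul]; simp
      nlinarith [hle 0, hle (Real.pi/2)]
  · refine ciSup_le fun θ => (hbound θ).trans ?_
    have h3 : N A ≤ max (N A) (N A') := le_max_left _ _
    have h4 : N A' ≤ max (N A) (N A') := le_max_right _ _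
    nlinarith [hN_nonneg A, hN_nonneg A']
end

section
/- Let H be a complex Hilbert space, let N be a norm on B(H), and let 0 ≤ ν ≤ 1. Then for every A ∈ B(H), w_{(N,ν)}(A) = (1/2) sup_{θ,φ∈ℝ} N(ν (e^{iθ} - i e^{iφ}) A + (1-ν) (e^{-iθ} + i e^{-iφ}) A*). -/
variable {H : Type*} [NormedAddCommGroup H] [InnerProductSpace ℂ H] [CompleteSpace H]

theorem stmt4 (N : (H →L[ℂ] H) → ℝ)
    (hN_nonneg : ∀ A, 0 ≤ N A)
    (hN_eq_zero : ∀ A, N A = 0 ↔ A = 0)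
    (hN_smul : ∀ (α : ℂ) (A), N (α • A) = ‖α‖ * N A)
    (hN_add : ∀ A B, N (A + B) ≤ N A + N B)
    (ν : ℝ) (hν₀ : 0 ≤ ν) (hν₁ : ν ≤ 1) (A : H →L[ℂ] H) :
    wN N ν A = (1 / 2) * ⨆ θ : ℝ, ⨆ φ : ℝ,
      N (((ν : ℂ) * (Complex.exp (θ * Complex.I) - Complex.I * Complex.exp (φ * Complex.I))) • A +
        (((1 - ν : ℝ) : ℂ) *
          (Complex.exp (-(θ * Complex.I)) + Complex.I * Complex.exp (-(φ * Complex.I)))) •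
            ContinuousLinearMap.adjoint A) := by
  set Adj := ContinuousLinearMap.adjoint A with hAdj
  set W : ℝ → (H →L[ℂ] H) := fun θ => weightedPart ν θ A with hWdef
  have hIexp : Complex.exp ((Real.pi/2 : ℂ) * Complex.I) = Complex.I := by
    rw [Complex.exp_mul_I]; simp
  have hexp1 : ∀ x : ℝ, Complex.exp ((↑(x - Real.pi/2) : ℂ) * Complex.I)
      = -(Complex.I * Complex.exp (x * Complex.I)) := by
    intro x
    push_cast
    rw [sub_mul, Complex.exp_sub, hIexp, Complex.div_I]
    ring
  have hexp2 : ∀ x : ℝ, Complex.exp (-((↑(x - Real.pi/2) : ℂ) * Complex.I))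
      = Complex.I * Complex.exp (-(x * Complex.I)) := by
    intro x
    push_cast
    rw [show -((x - Real.pi/2 : ℂ) * Complex.I) = (Real.pi/2 : ℂ) * Complex.I + -(x * Complex.I) by ring,
      Complex.exp_add, hIexp]
  -- the inner operator equals W θ + W (φ - π/2)
  have hg : ∀ θ φ : ℝ,
      (((ν : ℂ) * (Complex.exp (θ * Complex.I) - Complex.I * Complex.exp (φ * Complex.I))) • A +
        (((1 - ν : ℝ) : ℂ) *
          (Complex.exp (-(θ * Complex.I)) + Complex.I * Complex.exp (-(φ * Complex.I)))) • Adj)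
      = W θ + W (φ - Real.pi/2) := by
    intro θ φ
    simp only [hWdef, weightedPart, ← hAdj, hexp1 φ, hexp2 φ]
    module
  set M : ℝ := ν * N A + (1 - ν) * N Adj with hM
  have hnorm1 : ∀ x : ℝ, ‖Complex.exp ((x : ℂ) * Complex.I)‖ = 1 := by
    intro x; simp [Complex.norm_exp]
  have hnorm2 : ∀ x : ℝ, ‖Complex.exp (-((x : ℂ) * Complex.I))‖ = 1 := by
    intro x; simp [Complex.norm_exp]
  have hfM : ∀ θ : ℝ, N (W θ) ≤ M := by
    intro θ
    simp only [hWdef, weightedPart, ← hAdj]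
    calc N (((ν : ℂ) * Complex.exp (θ * Complex.I)) • A +
          (((1 - ν : ℝ) : ℂ) * Complex.exp (-(θ * Complex.I))) • Adj)
        ≤ N (((ν : ℂ) * Complex.exp (θ * Complex.I)) • A) +
          N ((((1 - ν : ℝ) : ℂ) * Complex.exp (-(θ * Complex.I))) • Adj) := hN_add _ _
      _ = ‖(ν : ℂ) * Complex.exp (θ * Complex.I)‖ * N A +
          ‖((1 - ν : ℝ) : ℂ) * Complex.exp (-(θ * Complex.I))‖ * N Adj := by
          rw [hN_smul, hN_smul]
      _ = M := by
          rw [norm_mul, norm_mul, hnorm1, hnorm2, Complex.norm_real, Complex.norm_real,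
            Real.norm_eq_abs, Real.norm_eq_abs, abs_of_nonneg hν₀,
            abs_of_nonneg (by linarith : (0:ℝ) ≤ 1 - ν), hM]
          ring
  have hbddW : BddAbove (Set.range fun θ => N (W θ)) := by
    refine ⟨M, ?_⟩; rintro _ ⟨θ, rfl⟩; exact hfM θ
  have hwN : wN N ν A = ⨆ θ, N (W θ) := rfl
  have hle_wN : ∀ θ, N (W θ) ≤ wN N ν A := fun θ => le_ciSup hbddW θ
  have hsum : ∀ θ φ : ℝ, N (W θ + W (φ - Real.pi/2)) ≤ 2 * M := by
    intro θ φ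
    calc N (W θ + W (φ - Real.pi/2)) ≤ N (W θ) + N (W (φ - Real.pi/2)) := hN_add _ _
      _ ≤ M + M := add_le_add (hfM θ) (hfM _)
      _ = 2 * M := by ring
  have hbddφ : ∀ θ : ℝ, BddAbove (Set.range fun φ => N (W θ + W (φ - Real.pi/2))) := by
    intro θ; refine ⟨2 * M, ?_⟩; rintro _ ⟨φ, rfl⟩; exact hsum θ φ
  have hbddθ : BddAbove (Set.range fun θ => ⨆ φ, N (W θ + W (φ - Real.pi/2))) := by
    refine ⟨2 * M, ?_⟩; rintro _ ⟨θ, rfl⟩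
    exact ciSup_le fun φ => hsum θ φ
  have hSrw : (⨆ θ : ℝ, ⨆ φ : ℝ,
      N (((ν : ℂ) * (Complex.exp (θ * Complex.I) - Complex.I * Complex.exp (φ * Complex.I))) • A +
        (((1 - ν : ℝ) : ℂ) *
          (Complex.exp (-(θ * Complex.I)) + Complex.I * Complex.exp (-(φ * Complex.I)))) • Adj))
      = ⨆ θ : ℝ, ⨆ φ : ℝ, N (W θ + W (φ - Real.pi/2)) := by
    refine iSup_congr fun θ => iSup_congr fun φ => ?_
    rw [hg θ φ]
  have hMain : (⨆ θ : ℝ, ⨆ φ : ℝ, N (W θ + W (φ - Real.pi/2))) = 2 * wN N ν A := by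
    apply le_antisymm
    · refine ciSup_le fun θ => ciSup_le fun φ => ?_
      calc N (W θ + W (φ - Real.pi/2)) ≤ N (W θ) + N (W (φ - Real.pi/2)) := hN_add _ _
        _ ≤ wN N ν A + wN N ν A := add_le_add (hle_wN θ) (hle_wN _)
        _ = 2 * wN N ν A := by ring
    · have h2f : ∀ θ : ℝ, 2 * N (W θ) ≤ ⨆ θ : ℝ, ⨆ φ : ℝ, N (W θ + W (φ - Real.pi/2)) := by
        intro θ
        have heq : W θ + W ((θ + Real.pi/2) - Real.pi/2) = (2 : ℂ) • W θ := by
          rw [show (θ + Real.pi/2) - Real.pi/2 = θ by ring, two_smul]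
        calc 2 * N (W θ) = N ((2 : ℂ) • W θ) := by rw [hN_smul]; norm_num
          _ = N (W θ + W ((θ + Real.pi/2) - Real.pi/2)) := by rw [heq]
          _ ≤ ⨆ φ : ℝ, N (W θ + W (φ - Real.pi/2)) := le_ciSup (hbddφ θ) (θ + Real.pi/2)
          _ ≤ ⨆ θ : ℝ, ⨆ φ : ℝ, N (W θ + W (φ - Real.pi/2)) := le_ciSup hbddθ θ
      have : wN N ν A ≤ (⨆ θ : ℝ, ⨆ φ : ℝ, N (W θ + W (φ - Real.pi/2))) / 2 := by
        rw [hwN]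
        exact ciSup_le fun θ => by linarith [h2f θ]
      linarith
  rw [show (⨆ θ : ℝ, ⨆ φ : ℝ,
      N (((ν : ℂ) * (Complex.exp (θ * Complex.I) - Complex.I * Complex.exp (φ * Complex.I))) • A +
        (((1 - ν : ℝ) : ℂ) *
          (Complex.exp (-(θ * Complex.I)) + Complex.I * Complex.exp (-(φ * Complex.I)))) •
            ContinuousLinearMap.adjoint A)) = 2 * wN N ν A from hSrw.trans hMain]
  ring
end

section
/- Let H be a complex Hilbert space, let N be a self-adjoint norm on B(H) (i.e., N(A*) = N(A) for all A), and let 0 ≤ ν ≤ 1. Then for every A ∈ B(H), ((1 + |1 - 2ν|)/2) N(A) ≤ w_{(N,ν)}(A) ≤ N(A). -/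
/-!
Write `W θ = ν e^{iθ} A + (1-ν) e^{-iθ} A*`. The triangle inequality and `N(A*) = N(A)` give
`N(W θ) ≤ ν N(A) + (1-ν) N(A) = N(A)`. For the lower bound, the two angles `0` and `π/2` suffice:
`W 0 - i W(π/2) = 2ν A` and `W 0 + i W(π/2) = 2(1-ν) A*`, so both `2ν N(A)` and `2(1-ν) N(A)` are
at most `2 w_{(N,ν)}(A)`, and `(1 + |1-2ν|)/2 = max ν (1-ν)`.
-/

variable {H : Type*} [NormedAddCommGroup H] [InnerProductSpace ℂ H] [CompleteSpace H]

lemma apply_add_smul_le {E : Type*} [AddCommGroup E] [Module ℂ E] (N : E → ℝ)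
    (hN_smul : ∀ (α : ℂ) (x : E), N (α • x) = ‖α‖ * N x)
    (hN_add : ∀ x y : E, N (x + y) ≤ N x + N y) (x y : E) (c : ℂ) :
    N (x + c • y) ≤ N x + ‖c‖ * N y :=
  hN_smul c y ▸ hN_add x (c • y)

lemma weightedPart_zero_sub_I_smul (ν : ℝ) (A : H →L[ℂ] H) :
    weightedPart ν 0 A - Complex.I • weightedPart ν (Real.pi / 2) A = ((2 * ν : ℝ) : ℂ) • A := by
  simp only [weightedPart, Complex.ofReal_zero, zero_mul, neg_zero, Complex.exp_zero,
    Complex.ofReal_div, Complex.ofReal_ofNat, Complex.exp_pi_div_two_mul_I, Complex.exp_neg,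
    Complex.inv_I]
  match_scalars <;> ring_nf <;> simp only [Complex.I_sq] <;> ring

lemma weightedPart_zero_add_I_smul (ν : ℝ) (A : H →L[ℂ] H) :
    weightedPart ν 0 A + Complex.I • weightedPart ν (Real.pi / 2) A =
      ((2 * (1 - ν) : ℝ) : ℂ) • ContinuousLinearMap.adjoint A := by
  simp only [weightedPart, Complex.ofReal_zero, zero_mul, neg_zero, Complex.exp_zero,
    Complex.ofReal_div, Complex.ofReal_ofNat, Complex.exp_pi_div_two_mul_I, Complex.exp_neg,
    Complex.inv_I]
  match_scalars <;> ring_nf <;> simp only [Complex.I_sq] <;> ring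

lemma apply_weightedPart_le (N : (H →L[ℂ] H) → ℝ)
    (hN_smul : ∀ (α : ℂ) (A : H →L[ℂ] H), N (α • A) = ‖α‖ * N A)
    (hN_add : ∀ A B : H →L[ℂ] H, N (A + B) ≤ N A + N B)
    (hN_sa : ∀ A : H →L[ℂ] H, N (ContinuousLinearMap.adjoint A) = N A)
    {ν : ℝ} (hν₀ : 0 ≤ ν) (hν₁ : ν ≤ 1) (θ : ℝ) (A : H →L[ℂ] H) :
    N (weightedPart ν θ A) ≤ N A := by
  calc N (weightedPart ν θ A)
      ≤ |ν| * N A + |1 - ν| * N A := by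
        refine (apply_add_smul_le N hN_smul hN_add _ _ _).trans_eq ?_
        simp [hN_smul, hN_sa, Complex.norm_exp, -Complex.ofReal_sub]
    _ = N A := by rw [abs_of_nonneg hν₀, abs_of_nonneg (sub_nonneg.2 hν₁)]; ring

lemma wN_le (N : (H →L[ℂ] H) → ℝ)
    (hN_smul : ∀ (α : ℂ) (A : H →L[ℂ] H), N (α • A) = ‖α‖ * N A)
    (hN_add : ∀ A B : H →L[ℂ] H, N (A + B) ≤ N A + N B)
    (hN_sa : ∀ A : H →L[ℂ] H, N (ContinuousLinearMap.adjoint A) = N A)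
    {ν : ℝ} (hν₀ : 0 ≤ ν) (hν₁ : ν ≤ 1) (A : H →L[ℂ] H) : wN N ν A ≤ N A :=
  ciSup_le (apply_weightedPart_le N hN_smul hN_add hN_sa hν₀ hν₁ · A)

lemma apply_weightedPart_le_wN (N : (H →L[ℂ] H) → ℝ)
    (hN_smul : ∀ (α : ℂ) (A : H →L[ℂ] H), N (α • A) = ‖α‖ * N A)
    (hN_add : ∀ A B : H →L[ℂ] H, N (A + B) ≤ N A + N B)
    (hN_sa : ∀ A : H →L[ℂ] H, N (ContinuousLinearMap.adjoint A) = N A)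
    {ν : ℝ} (hν₀ : 0 ≤ ν) (hν₁ : ν ≤ 1) (θ : ℝ) (A : H →L[ℂ] H) :
    N (weightedPart ν θ A) ≤ wN N ν A :=
  le_ciSup ⟨N A, Set.forall_mem_range.2 (apply_weightedPart_le N hN_smul hN_add hN_sa hν₀ hν₁ · A)⟩ θ

lemma mul_le_wN (N : (H →L[ℂ] H) → ℝ)
    (hN_smul : ∀ (α : ℂ) (A : H →L[ℂ] H), N (α • A) = ‖α‖ * N A)
    (hN_add : ∀ A B : H →L[ℂ] H, N (A + B) ≤ N A + N B)
    (hN_sa : ∀ A : H →L[ℂ] H, N (ContinuousLinearMap.adjoint A) = N A)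
    {ν : ℝ} (hν₀ : 0 ≤ ν) (hν₁ : ν ≤ 1) (A : H →L[ℂ] H) :
    ν * N A ≤ wN N ν A ∧ (1 - ν) * N A ≤ wN N ν A := by
  have hw := (apply_weightedPart_le_wN N hN_smul hN_add hN_sa hν₀ hν₁ · A)
  constructor
  · calc ν * N A = N (((2 * ν : ℝ) : ℂ) • A) / 2 := by
          rw [hN_smul, Complex.norm_real, Real.norm_of_nonneg (by positivity)]; ring
      _ = N (weightedPart ν 0 A + (-Complex.I) • weightedPart ν (Real.pi / 2) A) / 2 := by
          rw [neg_smul, ← sub_eq_add_neg, weightedPart_zero_sub_I_smul]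
      _ ≤ wN N ν A := by
          have := apply_add_smul_le N hN_smul hN_add (weightedPart ν 0 A)
            (weightedPart ν (Real.pi / 2) A) (-Complex.I)
          rw [norm_neg, Complex.norm_I] at this
          linarith [hw 0, hw (Real.pi / 2)]
  · calc (1 - ν) * N A = N (((2 * (1 - ν) : ℝ) : ℂ) • ContinuousLinearMap.adjoint A) / 2 := by
          rw [hN_smul, hN_sa, Complex.norm_real, Real.norm_of_nonneg (by linarith)]; ring
      _ = N (weightedPart ν 0 A + Complex.I • weightedPart ν (Real.pi / 2) A) / 2 := by
          rw [weightedPart_zero_add_I_smul]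
      _ ≤ wN N ν A := by
          have := apply_add_smul_le N hN_smul hN_add (weightedPart ν 0 A)
            (weightedPart ν (Real.pi / 2) A) Complex.I
          rw [Complex.norm_I] at this
          linarith [hw 0, hw (Real.pi / 2)]

lemma one_add_abs_one_sub_two_mul_div_two (ν : ℝ) : (1 + |1 - 2 * ν|) / 2 = max ν (1 - ν) := by
  rcases le_total ν (1 / 2) with h | h
  · rw [abs_of_nonneg (by linarith), max_eq_right (by linarith)]; ring
  · rw [abs_of_nonpos (by linarith), max_eq_left (by linarith)]; ring

theorem stmt5_general (N : (H →L[ℂ] H) → ℝ)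
    (hN_smul : ∀ (α : ℂ) (A), N (α • A) = ‖α‖ * N A)
    (hN_add : ∀ A B, N (A + B) ≤ N A + N B)
    (hN_sa : ∀ A, N (ContinuousLinearMap.adjoint A) = N A)
    (ν : ℝ) (hν₀ : 0 ≤ ν) (hν₁ : ν ≤ 1) (A : H →L[ℂ] H) :
    (1 + |1 - 2 * ν|) / 2 * N A ≤ wN N ν A ∧ wN N ν A ≤ N A := by
  obtain ⟨hν, h1ν⟩ := mul_le_wN N hN_smul hN_add hN_sa hν₀ hν₁ A
  refine ⟨?_, wN_le N hN_smul hN_add hN_sa hν₀ hν₁ A⟩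
  rw [one_add_abs_one_sub_two_mul_div_two]
  rcases max_choice ν (1 - ν) with h | h <;> rw [h] <;> assumption

theorem stmt5 (N : (H →L[ℂ] H) → ℝ)
    (hN_nonneg : ∀ A, 0 ≤ N A)
    (hN_eq_zero : ∀ A, N A = 0 ↔ A = 0)
    (hN_smul : ∀ (α : ℂ) (A), N (α • A) = ‖α‖ * N A)
    (hN_add : ∀ A B, N (A + B) ≤ N A + N B)
    (hN_sa : ∀ A, N (ContinuousLinearMap.adjoint A) = N A)
    (ν : ℝ) (hν₀ : 0 ≤ ν) (hν₁ : ν ≤ 1) (A : H →L[ℂ] H) :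
    (1 + |1 - 2 * ν|) / 2 * N A ≤ wN N ν A ∧ wN N ν A ≤ N A :=
  stmt5_general N hN_smul hN_add hN_sa ν hν₀ hν₁ A
end

section
/- Let H be a complex Hilbert space, let N be a self-adjoint norm on B(H), let A ∈ B(H), and let 0 ≤ μ, ν ≤ 1. If |ν - 1/2| ≤ |μ - 1/2|, then w_{(N,ν)}(A) ≤ w_{(N,μ)}(A). -/
variable {H : Type*} [NormedAddCommGroup H] [InnerProductSpace ℂ H] [CompleteSpace H]

lemma adjoint_weightedPart (ν θ : ℝ) (A : H →L[ℂ] H) :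
    ContinuousLinearMap.adjoint (weightedPart ν θ A) = weightedPart (1 - ν) θ A := by
  simp only [weightedPart, map_add, map_smulₛₗ, ContinuousLinearMap.adjoint_adjoint,
    map_mul, Complex.conj_ofReal, ← Complex.exp_conj, map_neg, Complex.conj_I, mul_neg]
  push_cast
  rw [add_comm]
  ring_nf

lemma weightedPart_comb (t μ ν θ : ℝ) (htν : ν = t*μ + (1-t)*(1-μ)) (A : H →L[ℂ] H) :
    weightedPart ν θ A
      = (t:ℂ) • weightedPart μ θ A + ((1-t : ℝ):ℂ) • weightedPart (1-μ) θ A := by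
  simp only [weightedPart]
  rw [htν]
  push_cast
  module

theorem stmt7 (N : (H →L[ℂ] H) → ℝ)
    (hN_nonneg : ∀ A, 0 ≤ N A)
    (hN_eq_zero : ∀ A, N A = 0 ↔ A = 0)
    (hN_smul : ∀ (α : ℂ) (A), N (α • A) = ‖α‖ * N A)
    (hN_add : ∀ A B, N (A + B) ≤ N A + N B)
    (hN_sa : ∀ A, N (ContinuousLinearMap.adjoint A) = N A)
    (A : H →L[ℂ] H) (μ ν : ℝ) (hμ₀ : 0 ≤ μ) (hμ₁ : μ ≤ 1) (hν₀ : 0 ≤ ν) (hν₁ : ν ≤ 1)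
    (h : |ν - 1 / 2| ≤ |μ - 1 / 2|) :
    wN N ν A ≤ wN N μ A := by
  obtain ⟨t, ht0, ht1, htν⟩ : ∃ t : ℝ, 0 ≤ t ∧ t ≤ 1 ∧ ν = t*μ + (1-t)*(1-μ) := by
    obtain ⟨hl, hr⟩ := abs_le.mp h
    rcases lt_trichotomy μ (1/2) with hμ | hμ | hμ
    · have habs : |μ - 1/2| = 1/2 - μ := by rw [abs_of_neg (by linarith)]; ring
      rw [habs] at hl hr
      have hden : (0:ℝ) < 1 - 2*μ := by linarith
      refine ⟨(1-μ-ν)/(1-2*μ), div_nonneg (by linarith) hden.le,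
        (div_le_one hden).mpr (by linarith), ?_⟩
      rw [div_mul_eq_mul_div, one_sub_div hden.ne', div_mul_eq_mul_div, ← add_div,
        eq_div_iff hden.ne']
      ring
    · have hνμ : ν = μ := by
        rw [hμ] at hl hr; simp at hl hr; linarith
      exact ⟨1, zero_le_one, le_refl 1, by rw [hνμ]; ring⟩
    · have habs : |μ - 1/2| = μ - 1/2 := abs_of_pos (by linarith)
      rw [habs] at hl hr
      have hden : (0:ℝ) < 2*μ - 1 := by linarith
      refine ⟨(ν-(1-μ))/(2*μ-1), div_nonneg (by linarith) hden.le,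
        (div_le_one hden).mpr (by linarith), ?_⟩
      rw [div_mul_eq_mul_div, one_sub_div hden.ne', div_mul_eq_mul_div, ← add_div,
        eq_div_iff hden.ne']
      ring
  have hnorm1 : ∀ θ : ℝ, ‖Complex.exp (θ * Complex.I)‖ = 1 := by
    intro θ; simp [Complex.norm_exp]
  have hnorm2 : ∀ θ : ℝ, ‖Complex.exp (-(θ * Complex.I))‖ = 1 := by
    intro θ; simp [Complex.norm_exp]
  have hbdd : BddAbove (Set.range fun θ : ℝ => N (weightedPart μ θ A)) := by
    refine ⟨N A + N A, ?_⟩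
    rintro x ⟨θ, rfl⟩
    refine (hN_add _ _).trans ?_
    rw [hN_smul, hN_smul, hN_sa, norm_mul, norm_mul, hnorm1, hnorm2]
    simp only [Complex.norm_real, Real.norm_eq_abs, mul_one]
    have := hN_nonneg A
    have h1 : |μ| = μ := abs_of_nonneg hμ₀
    have h2 : |(1-μ:ℝ)| = 1 - μ := abs_of_nonneg (by linarith)
    rw [h1, h2]
    nlinarith
  simp only [wN]
  refine ciSup_le fun θ => ?_
  calc N (weightedPart ν θ A)
      ≤ ‖(t:ℂ)‖ * N (weightedPart μ θ A) + ‖((1-t:ℝ):ℂ)‖ * N (weightedPart (1-μ) θ A) := by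
        rw [weightedPart_comb t μ ν θ htν A]
        exact (hN_add _ _).trans (by rw [hN_smul, hN_smul])
    _ = N (weightedPart μ θ A) := by
        rw [← adjoint_weightedPart μ θ A, hN_sa]
        simp only [Complex.norm_real, Real.norm_eq_abs, abs_of_nonneg ht0, abs_of_nonneg (by linarith : (0:ℝ) ≤ 1 - t)]
        ring
    _ ≤ ⨆ θ : ℝ, N (weightedPart μ θ A) := le_ciSup hbdd θ
end
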